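/- In any graph G of diameter 3 where D₂(G) is connected, if there exist vertices u, v with d₂(u,v) ≥ 6, then there exists a set A of 7 vertices inducing a subgraph of G isomorphic to the complement of P₇ (the path on 7 vertices). -/

import Mathlib

open SimpleGraph

/-- The 2-distance graph of `G`: same vertex set, two vertices adjacent iff
their distance in `G` equals `2`. -/
def twoDistGraph {V : Type*} (G : SimpleGraph V) : SimpleGraph V where
  Adj u v := G.dist u v = 2
  symm := by constructor; intro u v h; rwa [SimpleGraph.dist_comm]
  loopless := by constructor; intro v h; simp [SimpleGraph.dist_self] at h

/-!
Let `x₀, …, x₆` be consecutive vertices of a shortest path of `D₂(G)`, so that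
`d₂(xᵢ, xⱼ) = |i - j|`. Consecutive `xᵢ` are at distance 2 in `G`; any two others are at
distance 1 or 3, both odd since `diam G = 3`, and an odd distance to a fixed vertex is constant
along an edge whose ends both have odd distance to it. Following a geodesic `a - p - q - b` of
length 3, whose interior points are at distance 2 from an end, this shows that a vertex `m` with
`d₂(m, a), d₂(m, b) ≥ 3` is at distance 3 from both `a` and `b`; a second geodesic from `q` to
`m` then forces `d₂(a, b) ≤ 3`. With `m = x₃` this makes `x₀` and `x₆` adjacent, and
propagating (with `m = x₀` or `x₆`, or through a common neighbour) makes every non-consecutive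
pair adjacent.
-/

namespace SimpleGraph

variable {V : Type*} {G : SimpleGraph V} {a b c m : V}

theorem Walk.dist_getVert_getVert_of_length_eq_dist {u v : V} {p : G.Walk u v}
    (hp : p.length = G.dist u v) {i j : ℕ} (hij : i ≤ j) (hj : j ≤ p.length) :
    G.dist (p.getVert i) (p.getVert j) = j - i := by
  have hsub : ((p.take j).drop i).IsSubwalk p := (isSubwalk_drop _ i).trans (p.isSubwalk_take j)
  simpa [min_eq_right hij, min_eq_left hj] using (length_eq_dist_of_subwalk hp hsub).symm

theorem exists_adj_adj_adj_of_dist_eq_three (hG : G.Connected) (h : G.dist a b = 3) :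
    ∃ p q, G.Adj a p ∧ G.Adj p q ∧ G.Adj q b ∧ G.dist a q = 2 ∧ G.dist p b = 2 := by
  obtain ⟨w, hw⟩ := hG.exists_walk_length_eq_dist a b
  have hlen : w.length = 3 := hw.trans h
  have hb : w.getVert 3 = b := hlen ▸ w.getVert_length
  have hd {i j : ℕ} (hij : i ≤ j) (hj : j ≤ 3) :=
    w.dist_getVert_getVert_of_length_eq_dist hw hij (hlen ▸ hj)
  refine ⟨w.getVert 1, w.getVert 2, ?_, ?_, ?_, ?_, ?_⟩
  · simpa using w.adj_getVert_succ (i := 0) (by omega)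
  · exact w.adj_getVert_succ (by omega)
  · simpa [hb] using w.adj_getVert_succ (i := 2) (by omega)
  · simpa using hd (i := 0) (j := 2) (by omega) (by omega)
  · simpa [hb] using hd (i := 1) (j := 3) (by omega) (by omega)

theorem Adj.dist_eq_of_odd (h : G.Adj a b) (ha : Odd (G.dist a m)) (hb : Odd (G.dist b m)) :
    G.dist a m = G.dist b m := by
  rw [Nat.odd_iff] at ha hb
  rcases h.diff_dist_adj (u := m) with h' | h' | h' <;>
    rw [dist_comm (u := m), dist_comm (u := m)] at h' <;> omega

theorem odd_dist_of_ne_of_dist_ne_two (hG : G.Connected) (hd3 : ∀ a b : V, G.dist a b ≤ 3)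
    (hne : a ≠ b) (h2 : G.dist a b ≠ 2) : Odd (G.dist a b) := by
  have := hG.pos_dist_of_ne hne
  have := hd3 a b
  rw [Nat.odd_iff]
  omega

theorem twoDistGraph_dist_eq_one (h : G.dist a b = 2) : (twoDistGraph G).dist a b = 1 :=
  dist_eq_one_iff_adj.mpr h

theorem twoDistGraph_dist_le_two (hca : G.dist c a = 2) (hcb : G.dist c b = 2) :
    (twoDistGraph G).dist a b ≤ 2 :=
  dist_le (.cons (dist_comm.trans hca) (.cons hcb .nil) : (twoDistGraph G).Walk a b)

theorem odd_dist_of_two_le_twoDistGraph_dist (hG : G.Connected)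
    (hd3 : ∀ a b : V, G.dist a b ≤ 3) (h : 2 ≤ (twoDistGraph G).dist a b) :
    Odd (G.dist a b) := by
  refine odd_dist_of_ne_of_dist_ne_two hG hd3 ?_ fun h2 => ?_
  · rintro rfl
    simp at h
  · have := twoDistGraph_dist_eq_one h2
    omega

theorem odd_dist_of_dist_eq_two (hG : G.Connected) (hd3 : ∀ a b : V, G.dist a b ≤ 3)
    (hca : G.dist c a = 2) (h : 3 ≤ (twoDistGraph G).dist a m) : Odd (G.dist c m) := by
  refine odd_dist_of_ne_of_dist_ne_two hG hd3 ?_ fun hcm => ?_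
  · rintro rfl
    have := twoDistGraph_dist_eq_one (dist_comm.trans hca)
    omega
  · have := twoDistGraph_dist_le_two hca hcm
    omega

theorem dist_eq_three_of_three_le_twoDistGraph_dist (hG : G.Connected)
    (hd3 : ∀ a b : V, G.dist a b ≤ 3) (hab : G.dist a b = 3)
    (ha : 3 ≤ (twoDistGraph G).dist a m) (hb : 3 ≤ (twoDistGraph G).dist b m) :
    G.dist a m = 3 ∧ G.dist b m = 3 := by
  obtain ⟨p, q, hap, hpq, hqb, haq, hpb⟩ := exists_adj_adj_adj_of_dist_eq_three hG hab
  have hoa : Odd (G.dist a m) := odd_dist_of_two_le_twoDistGraph_dist hG hd3 (by omega)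
  have hob : Odd (G.dist b m) := odd_dist_of_two_le_twoDistGraph_dist hG hd3 (by omega)
  have hop := odd_dist_of_dist_eq_two hG hd3 hpb hb
  have hoq := odd_dist_of_dist_eq_two hG hd3 (dist_comm.trans haq) ha
  have hpa := hap.dist_eq_of_odd hoa hop
  have hqp := hpq.dist_eq_of_odd hop hoq
  have hbq := hqb.dist_eq_of_odd hoq hob
  have htri := hG.dist_triangle (u := a) (v := m) (w := b)
  rw [dist_comm (u := m)] at htri
  have := hd3 a m
  rw [Nat.odd_iff] at hoa
  omega

theorem twoDistGraph_dist_le_three_of_dist_eq_three (hG : G.Connected)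
    (hd3 : ∀ a b : V, G.dist a b ≤ 3) (hab : G.dist a b = 3)
    (ha : 3 ≤ (twoDistGraph G).dist a m) (hb : 3 ≤ (twoDistGraph G).dist b m) :
    (twoDistGraph G).dist a b ≤ 3 := by
  by_contra! h4
  obtain ⟨-, q, -, -, hqb, haq, -⟩ := exists_adj_adj_adj_of_dist_eq_three hG hab
  have hbm := (dist_eq_three_of_three_le_twoDistGraph_dist hG hd3 hab ha hb).2
  have hqm : G.dist q m = 3 :=
    (hqb.dist_eq_of_odd (odd_dist_of_dist_eq_two hG hd3 (dist_comm.trans haq) ha)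
      (by rw [hbm]; decide)).trans hbm
  obtain ⟨r, s, hqr, hrs, hsm, hqs, hrm⟩ := exists_adj_adj_adj_of_dist_eq_three hG hqm
  have hrb : G.dist r b = 1 := by
    have hodd := odd_dist_of_dist_eq_two hG hd3 hrm (by rwa [dist_comm])
    have htri := hG.dist_triangle (u := r) (v := q) (w := b)
    rw [dist_eq_one_iff_adj.mpr hqr.symm, dist_eq_one_iff_adj.mpr hqb] at htri
    rw [Nat.odd_iff] at hodd
    omega
  have hsb : G.dist s b = 1 := by
    have hne : s ≠ b := by
      rintro rfl
      rw [dist_eq_one_iff_adj.mpr hsm] at hbm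
      omega
    have hsb2 : G.dist s b ≠ 2 := fun h2 => by
      have : (twoDistGraph G).dist a b ≤ 3 :=
        dist_le (.cons haq (.cons hqs (.cons h2 .nil)) : (twoDistGraph G).Walk a b)
      omega
    have hodd := odd_dist_of_ne_of_dist_ne_two hG hd3 hne hsb2
    have htri := hG.dist_triangle (u := s) (v := r) (w := b)
    rw [dist_eq_one_iff_adj.mpr hrs.symm, hrb] at htri
    rw [Nat.odd_iff] at hodd
    omega
  have htri := hG.dist_triangle (u := b) (v := s) (w := m)
  rw [dist_comm (u := b) (v := s), hsb, dist_eq_one_iff_adj.mpr hsm] at htri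
  omega

theorem adj_of_twoDistGraph_dist_eq (hG : G.Connected) (hd3 : ∀ a b : V, G.dist a b ≤ 3)
    {x : Fin 7 → V} (hx : ∀ i j, (twoDistGraph G).dist (x i) (x j) = ((i : ℤ) - j).natAbs)
    {i j : Fin 7} (hij : 2 ≤ ((i : ℤ) - j).natAbs) : G.Adj (x i) (x j) := by
  have far (i j : Fin 7) (h : 3 ≤ ((i : ℤ) - j).natAbs) :
      3 ≤ (twoDistGraph G).dist (x i) (x j) :=
    (hx i j).symm ▸ h
  have adj_of_ne_three (i j : Fin 7) (h2 : 2 ≤ ((i : ℤ) - j).natAbs)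
      (h : G.dist (x i) (x j) ≠ 3) : G.Adj (x i) (x j) := by
    have hodd := odd_dist_of_two_le_twoDistGraph_dist hG hd3 ((hx i j).symm ▸ h2)
    have := hd3 (x i) (x j)
    rw [← dist_eq_one_iff_adj]
    rw [Nat.odd_iff] at hodd
    omega
  have ne_three_of_adj {a b : V} (h : G.Adj a b) : G.dist a b ≠ 3 := by
    rw [dist_eq_one_iff_adj.mpr h]
    decide
  have ne_three_of_adj_adj {a b c : V} (hac : G.Adj a c) (hcb : G.Adj c b) :
      G.dist a b ≠ 3 := by
    have : G.dist a b ≤ 2 := dist_le (.cons hac (.cons hcb .nil) : G.Walk a b)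
    omega
  have spread (i j k : Fin 7) (h : G.dist (x i) (x j) = 3) (hik : 3 ≤ ((i : ℤ) - k).natAbs)
      (hjk : 3 ≤ ((j : ℤ) - k).natAbs) : G.dist (x i) (x k) = 3 ∧ G.dist (x j) (x k) = 3 :=
    dist_eq_three_of_three_le_twoDistGraph_dist hG hd3 h (far i k hik) (far j k hjk)
  have h06 := adj_of_ne_three 0 6 (by decide) fun h => by
    have := twoDistGraph_dist_le_three_of_dist_eq_three hG hd3 h (far 0 3 (by decide))
      (far 6 3 (by decide))
    rw [hx] at this
    exact absurd this (by decide)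
  have h02 := adj_of_ne_three 0 2 (by decide) fun h =>
    ne_three_of_adj h06 (spread 0 2 6 h (by decide) (by decide)).1
  have h03 := adj_of_ne_three 0 3 (by decide) fun h =>
    ne_three_of_adj h06 (spread 0 3 6 h (by decide) (by decide)).1
  have h36 := adj_of_ne_three 3 6 (by decide) fun h =>
    ne_three_of_adj h06.symm (spread 3 6 0 h (by decide) (by decide)).2
  have h46 := adj_of_ne_three 4 6 (by decide) fun h =>
    ne_three_of_adj h06.symm (spread 4 6 0 h (by decide) (by decide)).2
  have h13 := adj_of_ne_three 1 3 (by decide) fun h =>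
    ne_three_of_adj h36 (spread 1 3 6 h (by decide) (by decide)).2
  have h35 := adj_of_ne_three 3 5 (by decide) fun h =>
    ne_three_of_adj h03.symm (spread 3 5 0 h (by decide) (by decide)).1
  have h04 := adj_of_ne_three 0 4 (by decide) (ne_three_of_adj_adj h06 h46.symm)
  have h05 := adj_of_ne_three 0 5 (by decide) (ne_three_of_adj_adj h03 h35)
  have h15 := adj_of_ne_three 1 5 (by decide) (ne_three_of_adj_adj h13 h35)
  have h16 := adj_of_ne_three 1 6 (by decide) (ne_three_of_adj_adj h13 h36)
  have h26 := adj_of_ne_three 2 6 (by decide) (ne_three_of_adj_adj h02.symm h06)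
  have h14 := adj_of_ne_three 1 4 (by decide) (ne_three_of_adj_adj h16 h46.symm)
  have h24 := adj_of_ne_three 2 4 (by decide) (ne_three_of_adj_adj h02.symm h04)
  have h25 := adj_of_ne_three 2 5 (by decide) (ne_three_of_adj_adj h02.symm h05)
  fin_cases i <;> fin_cases j <;>
    first | assumption | exact G.adj_symm ‹_› | norm_num at hij

theorem adj_iff_of_twoDistGraph_dist_eq (hG : G.Connected) (hd3 : ∀ a b : V, G.dist a b ≤ 3)
    {x : Fin 7 → V} (hx : ∀ i j, (twoDistGraph G).dist (x i) (x j) = ((i : ℤ) - j).natAbs)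
    (i j : Fin 7) : G.Adj (x i) (x j) ↔ 2 ≤ ((i : ℤ) - j).natAbs := by
  refine ⟨fun h => ?_, adj_of_twoDistGraph_dist_eq hG hd3 hx⟩
  by_contra! hlt
  obtain hij | hij : ((i : ℤ) - j).natAbs = 0 ∨ ((i : ℤ) - j).natAbs = 1 := by omega
  · rw [Fin.ext (by omega : (i : ℕ) = j)] at h
    exact h.ne rfl
  · have h2 : G.dist (x i) (x j) = 2 := dist_eq_one_iff_adj.mp ((hx i j).trans hij)
    rw [dist_eq_one_iff_adj.mpr h] at h2
    omega

theorem injective_of_twoDistGraph_dist_eq {n : ℕ} {x : Fin n → V}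
    (hx : ∀ i j, (twoDistGraph G).dist (x i) (x j) = ((i : ℤ) - j).natAbs) :
    Function.Injective x := fun i j h => by
  have := hx i j
  rw [h, dist_self] at this
  omega

end SimpleGraph

theorem stmt_16_general {V : Type*} (G : SimpleGraph V)
    (hG : G.Connected) (hdiam : G.diam = 3)
    (u v : V) (huv : 6 ≤ (twoDistGraph G).dist u v) :
    ∃ a : Fin 7 → V, Function.Injective a ∧
      ∀ i j : Fin 7, G.Adj (a i) (a j) ↔ 2 ≤ ((i : ℤ) - (j : ℤ)).natAbs := by
  have hd3 (a b : V) : G.dist a b ≤ 3 :=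
    hdiam ▸ dist_le_diam (ediam_ne_top_of_diam_ne_zero (by omega))
  obtain ⟨w, hw⟩ := exists_walk_of_dist_ne_zero (by omega : (twoDistGraph G).dist u v ≠ 0)
  have hx (i j : Fin 7) :
      (twoDistGraph G).dist (w.getVert i) (w.getVert j) = ((i : ℤ) - j).natAbs := by
    rcases le_total i j with h | h
    · rw [w.dist_getVert_getVert_of_length_eq_dist hw h (by omega)]
      omega
    · rw [dist_comm, w.dist_getVert_getVert_of_length_eq_dist hw h (by omega)]
      omega
  exact ⟨_, injective_of_twoDistGraph_dist_eq hx, adj_iff_of_twoDistGraph_dist_eq hG hd3 hx⟩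

theorem stmt_16 {V : Type*} [Fintype V] (G : SimpleGraph V)
    (hG : G.Connected) (hdiam : G.diam = 3) (h2 : (twoDistGraph G).Connected)
    (u v : V) (huv : 6 ≤ (twoDistGraph G).dist u v) :
    ∃ a : Fin 7 → V, Function.Injective a ∧
      ∀ i j : Fin 7, G.Adj (a i) (a j) ↔ 2 ≤ ((i : ℤ) - (j : ℤ)).natAbs :=
  stmt_16_general G hG hdiam u v huv
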